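/- Let n ≥ 1 and let α, β be permutations of {1,…,2n}. Assume |γ_{n,n}⁻¹β| + |β| = 2n − 2, |γ_{n,n}⁻¹α| + |βα⁻¹| = |γ_{n,n}⁻¹β|, and |α| + |βα⁻¹| = |β|. Then α = β. -/

import Mathlib

/-!
For a permutation `σ` of a finite set of size `m`, `cycleCount σ` is the number of cycles
(fixed points count as cycles) and `permLen σ = m - cycleCount σ` (the minimal number of
transpositions needed to write `σ`).  We model `{1,…,2n}` as `Fin n ⊕ Fin n`, the first
summand being `{1,…,n}` and the second `{n+1,…,2n}`.  `gammaNN n` is the product of the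
two `n`-cycles `(1,2,…,n)` and `(n+1,…,2n)`.
-/

/-- The number of cycles of a permutation, where fixed points count as cycles. -/
noncomputable def cycleCount {α : Type*} [Fintype α] [DecidableEq α]
    (σ : Equiv.Perm α) : ℕ :=
  Multiset.card σ.cycleType + (Fintype.card α - σ.support.card)

/-- `|σ| = m - #(σ)`, the minimal number of transpositions whose product is `σ`. -/
noncomputable def permLen {α : Type*} [Fintype α] [DecidableEq α]
    (σ : Equiv.Perm α) : ℕ :=
  Fintype.card α - cycleCount σ

/-- `γ_{n,n}`: the product of the two `n`-cycles `(1,…,n)` and `(n+1,…,2n)`. -/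
def gammaNN (n : ℕ) : Equiv.Perm (Fin n ⊕ Fin n) :=
  Equiv.sumCongr (finRotate n) (finRotate n)

/-- A permutation of `{1,…,2n}` is connected if some cycle of it contains both an
element of `{1,…,n}` and an element of `{n+1,…,2n}`. -/
def IsConnectedPerm {n : ℕ} (β : Equiv.Perm (Fin n ⊕ Fin n)) : Prop :=
  ∃ a b : Fin n, β.SameCycle (Sum.inl a) (Sum.inr b)


/-!
Let `rank σ` be the rank of `g ↦ g ∘ σ - g` on functions `β → K`. Since
`g ∘ (σ τ) - g = (g ∘ σ - g) ∘ τ + (g ∘ τ - g)`, the rank is subadditive, and a transposition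
has rank at most one; splitting each cycle into transpositions gives `rank σ ≤ |σ|`. The kernel
for `γ_{n,n}⁻¹` consists of the functions constant on its two cycles, so its rank is at least
`2n - 2`. Hence `2n - 2 ≤ |γ_{n,n}⁻¹ α| + |α|`, while adding the last two hypotheses and using
the first gives `|γ_{n,n}⁻¹ α| + |α| + 2 |β α⁻¹| = 2n - 2`. So `|β α⁻¹| = 0`, i.e. `α = β`.
-/

open Equiv Equiv.Perm Finset

namespace LinearMap

variable {K V W : Type*} [Field K] [AddCommGroup V] [Module K V] [AddCommGroup W] [Module K W]
  [FiniteDimensional K W]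

theorem finrank_range_add_le (f g : V →ₗ[K] W) :
    Module.finrank K (range (f + g)) ≤ Module.finrank K (range f) + Module.finrank K (range g) := by
  have hle : range (f + g) ≤ range f ⊔ range g := by
    rintro _ ⟨x, rfl⟩
    exact Submodule.add_mem_sup (mem_range_self f x) (mem_range_self g x)
  exact (Submodule.finrank_mono hle).trans (Submodule.finrank_add_le_finrank_add_finrank _ _)

end LinearMap

section PermLen

variable {β : Type*} [Fintype β] [DecidableEq β]

theorem two_mul_card_cycleType_le_card_support (σ : Perm β) :
    2 * Multiset.card σ.cycleType ≤ #σ.support := by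
  rw [← σ.sum_cycleType, mul_comm, ← smul_eq_mul]
  exact Multiset.card_nsmul_le_sum fun _ hk => σ.two_le_of_mem_cycleType hk

theorem permLen_eq_card_support_sub (σ : Perm β) :
    permLen σ = #σ.support - Multiset.card σ.cycleType := by
  have := two_mul_card_cycleType_le_card_support σ
  have := σ.support.card_le_univ
  unfold permLen cycleCount
  omega

theorem permLen_eq_zero_iff {σ : Perm β} : permLen σ = 0 ↔ σ = 1 := by
  constructor
  · intro h
    have := two_mul_card_cycleType_le_card_support σ
    rw [permLen_eq_card_support_sub] at h
    exact card_cycleType_eq_zero.mp (by omega)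
  · rintro rfl
    simp [permLen_eq_card_support_sub]

theorem permLen_inv (σ : Perm β) : permLen σ⁻¹ = permLen σ := by
  rw [permLen_eq_card_support_sub, permLen_eq_card_support_sub, cycleType_inv, support_inv]

theorem permLen_mul_of_disjoint {σ τ : Perm β} (h : σ.Disjoint τ) :
    permLen (σ * τ) = permLen σ + permLen τ := by
  have := two_mul_card_cycleType_le_card_support σ
  have := two_mul_card_cycleType_le_card_support τ
  rw [permLen_eq_card_support_sub, permLen_eq_card_support_sub, permLen_eq_card_support_sub,
    h.card_support_mul, h.cycleType_mul, Multiset.card_add]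
  omega

theorem Equiv.Perm.IsCycle.permLen_add_one {σ : Perm β} (hσ : σ.IsCycle) :
    permLen σ + 1 = #σ.support := by
  have := hσ.two_le_card_support
  rw [permLen_eq_card_support_sub, card_cycleType_eq_one.mpr hσ]
  omega

end PermLen

section PermDiff

variable {K : Type*} [Field K] {β : Type*}

variable (K) in
noncomputable def permDiff (σ : Perm β) : (β → K) →ₗ[K] (β → K) :=
  LinearMap.funLeft K K σ - LinearMap.id

variable (K) in
noncomputable def permRank (σ : Perm β) : ℕ :=
  Module.finrank K (LinearMap.range (permDiff K σ))

@[simp]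
theorem permDiff_apply (σ : Perm β) (g : β → K) (x : β) : permDiff K σ g x = g (σ x) - g x :=
  rfl

theorem permDiff_mul (σ τ : Perm β) :
    permDiff K (σ * τ) = (LinearMap.funLeft K K τ).comp (permDiff K σ) + permDiff K τ := by
  ext g x
  simp

theorem permDiff_one : permDiff K (1 : Perm β) = 0 := by
  ext
  simp

theorem apply_zpow_eq_of_mem_ker_permDiff {σ : Perm β} {g : β → K}
    (hg : g ∈ LinearMap.ker (permDiff K σ)) (x : β) (k : ℤ) : g ((σ ^ k) x) = g x := by
  have hσg : ∀ z, g (σ z) = g z := fun z => sub_eq_zero.mp (congrFun hg z)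
  induction k using Int.induction_on generalizing x with
  | zero => rfl
  | succ k ih => rw [zpow_add_one, mul_apply, ih, hσg]
  | pred k ih =>
    rw [zpow_sub_one, mul_apply, ih]
    simpa using (hσg (σ⁻¹ x)).symm

theorem apply_eq_of_mem_ker_permDiff {σ : Perm β} {g : β → K}
    (hg : g ∈ LinearMap.ker (permDiff K σ)) {x y : β} (hxy : σ.SameCycle x y) : g x = g y := by
  obtain ⟨k, rfl⟩ := hxy
  exact (apply_zpow_eq_of_mem_ker_permDiff hg x k).symm

theorem permRank_swap_le_one [DecidableEq β] (x y : β) : permRank K (swap x y) ≤ 1 := by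
  have hle : LinearMap.range (permDiff K (swap x y)) ≤ K ∙ (Pi.single x 1 - Pi.single y 1) := by
    rintro _ ⟨g, rfl⟩
    refine Submodule.mem_span_singleton.mpr ⟨g y - g x, funext fun i => ?_⟩
    by_cases hix : i = x <;> by_cases hiy : i = y <;> simp_all [swap_apply_of_ne_of_ne]
  exact (Submodule.finrank_mono hle).trans (finrank_span_le_card _)

variable [Fintype β]

theorem permRank_mul_le (σ τ : Perm β) : permRank K (σ * τ) ≤ permRank K σ + permRank K τ := by
  unfold permRank
  rw [permDiff_mul]
  refine (LinearMap.finrank_range_add_le _ _).trans (Nat.add_le_add_right ?_ _)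
  rw [LinearMap.range_comp]
  exact Submodule.finrank_map_le _ _

/-- Kernel elements are constant on cycles, so restricting them to a set `s` meeting every
cycle is injective. -/
theorem card_sub_card_le_permRank {σ : Perm β} (s : Finset β)
    (hs : ∀ x, ∃ y ∈ s, σ.SameCycle x y) : Fintype.card β - #s ≤ permRank K σ := by
  let restrict : (β → K) →ₗ[K] (s → K) := LinearMap.funLeft K K Subtype.val
  have hinj : Function.Injective (restrict.domRestrict (LinearMap.ker (permDiff K σ))) := by
    rw [← LinearMap.ker_eq_bot, Submodule.eq_bot_iff]
    rintro ⟨g, hg⟩ hg0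
    refine Subtype.ext (funext fun x => ?_)
    obtain ⟨y, hy, hxy⟩ := hs x
    change g x = 0
    rw [apply_eq_of_mem_ker_permDiff hg hxy]
    exact congrFun (LinearMap.mem_ker.mp hg0) ⟨y, hy⟩
  have hker := LinearMap.finrank_le_finrank_of_injective hinj
  have hrk := LinearMap.finrank_range_add_finrank_ker (permDiff K σ)
  rw [Module.finrank_fintype_fun_eq_card, Fintype.card_coe] at hker
  rw [Module.finrank_fintype_fun_eq_card] at hrk
  unfold permRank
  omega

variable [DecidableEq β]

theorem Equiv.Perm.IsCycle.permRank_add_one_le {σ : Perm β} (hσ : σ.IsCycle) :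
    permRank K σ + 1 ≤ #σ.support := by
  induction h : #σ.support using Nat.strong_induction_on generalizing σ with
  | _ k ih =>
    obtain ⟨x, hx, -⟩ := id hσ
    have hswap := permRank_swap_le_one (K := K) x (σ x)
    by_cases hxx : σ (σ x) = x
    · rw [← h, hσ.eq_swap_of_apply_apply_eq_self hx hxx, card_support_swap (Ne.symm hx)]
      omega
    · -- peel off one transposition: `swap x (σ x) * σ` is a cycle on `σ.support \ {x}`
      have hcard : #(swap x (σ x) * σ).support + 1 = k := by
        rw [← h, support_swap_mul_eq σ x hxx, sdiff_singleton_eq_erase,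
          card_erase_add_one (mem_support.mpr hx)]
      have hrank := permRank_mul_le (K := K) (swap x (σ x)) (swap x (σ x) * σ)
      rw [← mul_assoc, swap_mul_self, one_mul] at hrank
      have := ih _ (by omega) (hσ.swap_mul hx hxx) rfl
      omega

theorem permRank_le_permLen (σ : Perm β) : permRank K σ ≤ permLen σ := by
  induction σ using cycle_induction_on with
  | base_one =>
    rw [permRank, permDiff_one, LinearMap.range_zero, finrank_bot]
    exact Nat.zero_le _
  | base_cycles σ hσ =>
    have := hσ.permRank_add_one_le (K := K)
    have := hσ.permLen_add_one
    omega
  | induction_disjoint σ τ hd _ hσ hτ =>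
    rw [permLen_mul_of_disjoint hd]
    exact (permRank_mul_le σ τ).trans (Nat.add_le_add hσ hτ)

end PermDiff

section Gamma

theorem sameCycle_finRotate {n : ℕ} (a b : Fin n) : (finRotate n).SameCycle a b := by
  rcases le_or_gt n 1 with hn | hn
  · have := Fin.subsingleton_iff_le_one.mpr hn
    exact Subsingleton.elim a b ▸ SameCycle.refl _ _
  · have hsupp : ∀ c, finRotate n c ≠ c := fun c =>
      mem_support.mp (by simp [support_finRotate_of_le hn])
    exact (isCycle_finRotate_of_le hn).sameCycle (hsupp a) (hsupp b)

variable {α₁ α₂ : Type*}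

theorem Equiv.Perm.sumCongr_zpow (f : Perm α₁) (g : Perm α₂) (k : ℤ) :
    Perm.sumCongr f g ^ k = Perm.sumCongr (f ^ k) (g ^ k) := by
  simpa using (map_zpow (sumCongrHom α₁ α₂) (f, g) k).symm

variable {f : Perm α₁} {g : Perm α₂}

theorem Equiv.Perm.SameCycle.sumCongr_inl {a b : α₁} (h : f.SameCycle a b) :
    (Perm.sumCongr f g).SameCycle (Sum.inl a) (Sum.inl b) := by
  obtain ⟨k, rfl⟩ := h
  exact ⟨k, by simp [sumCongr_zpow]⟩

theorem Equiv.Perm.SameCycle.sumCongr_inr {a b : α₂} (h : g.SameCycle a b) :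
    (Perm.sumCongr f g).SameCycle (Sum.inr a) (Sum.inr b) := by
  obtain ⟨k, rfl⟩ := h
  exact ⟨k, by simp [sumCongr_zpow]⟩

theorem two_mul_sub_two_le_permRank_gammaNN_inv (K : Type*) [Field K] (n : ℕ) :
    2 * n - 2 ≤ permRank K (gammaNN n)⁻¹ := by
  cases n with
  | zero => exact Nat.zero_le _
  | succ m =>
    have hs : ∀ x, ∃ y ∈ ({Sum.inl 0, Sum.inr 0} : Finset (Fin (m + 1) ⊕ Fin (m + 1))),
        (gammaNN (m + 1))⁻¹.SameCycle x y := by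
      rintro (a | a)
      · exact ⟨_, by simp, sameCycle_inv.mpr (sameCycle_finRotate a 0).sumCongr_inl⟩
      · exact ⟨_, by simp, sameCycle_inv.mpr (sameCycle_finRotate a 0).sumCongr_inr⟩
    have := card_sub_card_le_permRank (K := K) _ hs
    have := card_le_two (a := (Sum.inl 0 : Fin (m + 1) ⊕ Fin (m + 1))) (b := Sum.inr 0)
    simp only [Fintype.card_sum, Fintype.card_fin] at *
    omega

end Gamma

theorem geodesic_squeeze_general (n : ℕ)
    (α β : Equiv.Perm (Fin n ⊕ Fin n))
    (h1 : permLen ((gammaNN n)⁻¹ * β) + permLen β = 2 * n - 2)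
    (h2 : permLen ((gammaNN n)⁻¹ * α) + permLen (β * α⁻¹) = permLen ((gammaNN n)⁻¹ * β))
    (h3 : permLen α + permLen (β * α⁻¹) = permLen β) :
    α = β := by
  have hlower : 2 * n - 2 ≤ permLen ((gammaNN n)⁻¹ * α) + permLen α :=
    calc 2 * n - 2 ≤ permRank ℚ (gammaNN n)⁻¹ := two_mul_sub_two_le_permRank_gammaNN_inv ℚ n
      _ = permRank ℚ ((gammaNN n)⁻¹ * α * α⁻¹) := by rw [mul_inv_cancel_right]
      _ ≤ permRank ℚ ((gammaNN n)⁻¹ * α) + permRank ℚ α⁻¹ := permRank_mul_le _ _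
      _ ≤ permLen ((gammaNN n)⁻¹ * α) + permLen α⁻¹ :=
        Nat.add_le_add (permRank_le_permLen _) (permRank_le_permLen _)
      _ = permLen ((gammaNN n)⁻¹ * α) + permLen α := by rw [permLen_inv]
  have hβα : permLen (β * α⁻¹) = 0 := by omega
  exact (mul_inv_eq_one.mp (permLen_eq_zero_iff.mp hβα)).symm

/-- If `β` lies on a geodesic from the identity to `γ_{n,n}` and `α` lies between
the identity and `β` as well as between `β` and `γ_{n,n}` (in the sense of the three
stated length equalities), then `α = β`. -/
theorem geodesic_squeeze (n : ℕ) (hn : 1 ≤ n)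
    (α β : Equiv.Perm (Fin n ⊕ Fin n))
    (h1 : permLen ((gammaNN n)⁻¹ * β) + permLen β = 2 * n - 2)
    (h2 : permLen ((gammaNN n)⁻¹ * α) + permLen (β * α⁻¹) = permLen ((gammaNN n)⁻¹ * β))
    (h3 : permLen α + permLen (β * α⁻¹) = permLen β) :
    α = β :=
  geodesic_squeeze_general n α β h1 h2 h3
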